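/- arXiv:2402.07265 — 4 statements merged into one kernel-verified Lean document; each statement's English description precedes it below -/
import Mathlib

section
/- Let X be a path-connected space such that the real cup length of X equals n and there are classes u₁, ..., uₙ, all of even degree, with u₁ ∪ ⋯ ∪ uₙ ≠ 0. Then the zero-divisor cup length of X with real coefficients is at least 2n. -/
open TensorProduct

open Finset in
lemma polarization_aux {R : Type*} [CommRing R] (n : ℕ) (u : Fin n → R) :
    ∑ S : Finset (Fin n), (-1 : ℤ) ^ (Sᶜ.card) • (∑ i ∈ S, u i) ^ n
      = n.factorial • ∏ i, u i := by
  classical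
  calc
    ∑ S : Finset (Fin n), (-1 : ℤ) ^ (Sᶜ.card) • (∑ i ∈ S, u i) ^ n
        = ∑ S : Finset (Fin n), ∑ g : Fin n → Fin n,
            (if ∀ j, g j ∈ S then (-1 : ℤ) ^ (Sᶜ.card) • ∏ j, u (g j) else 0) := by
      refine Finset.sum_congr rfl fun S _ => ?_
      have h1 : (∑ i ∈ S, u i) ^ n = ∏ _j : Fin n, ∑ i ∈ S, u i := by
        rw [Fin.prod_const]
      have h2 : Fintype.piFinset (fun _ : Fin n => S)
          = univ.filter (fun g : Fin n → Fin n => ∀ j, g j ∈ S) := by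
        ext g; simp [Fintype.mem_piFinset]
      rw [h1, Finset.prod_univ_sum, Finset.smul_sum, h2, Finset.sum_filter]
    _ = ∑ g : Fin n → Fin n, ∑ S : Finset (Fin n),
            (if ∀ j, g j ∈ S then (-1 : ℤ) ^ (Sᶜ.card) • ∏ j, u (g j) else 0) :=
      Finset.sum_comm
    _ = ∑ g : Fin n → Fin n,
          (if Function.Surjective g then (1:ℤ) else 0) • ∏ j, u (g j) := by
      refine Finset.sum_congr rfl fun g _ => ?_
      have step : ∀ S : Finset (Fin n),
          (if ∀ j, g j ∈ S then (-1 : ℤ) ^ (Sᶜ.card) • ∏ j, u (g j) else 0)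
          = (if ∀ j, g j ∈ S then (-1 : ℤ) ^ (Sᶜ.card) else 0) • ∏ j, u (g j) := by
        intro S; split <;> simp
      rw [Finset.sum_congr rfl fun S _ => step S, ← Finset.sum_smul]
      congr 1
      have h2 : ∀ S : Finset (Fin n), (∀ j, g j ∈ S) ↔ Finset.image g univ ⊆ S := by
        intro S
        constructor
        · intro h x hx
          rcases Finset.mem_image.mp hx with ⟨a, _, rfl⟩; exact h a
        · intro h j; exact h (Finset.mem_image_of_mem g (Finset.mem_univ j))
      rw [Finset.sum_congr rfl fun S _ => if_congr (h2 S) rfl rfl, ← Finset.sum_filter]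
      have h3 : ∑ S ∈ univ.filter (fun S => Finset.image g univ ⊆ S), (-1:ℤ)^(Sᶜ.card)
          = ∑ T ∈ (Finset.image g univ)ᶜ.powerset, (-1:ℤ)^(T.card) := by
        refine Finset.sum_nbij' (fun S => Sᶜ) (fun T => Tᶜ) ?_ ?_ ?_ ?_ ?_
        · intro S hS
          simp only [Finset.mem_filter, Finset.mem_univ, true_and] at hS
          simpa [Finset.mem_powerset] using Finset.compl_subset_compl.mpr hS
        · intro T hT
          simp only [Finset.mem_powerset] at hT
          simp only [Finset.mem_filter, Finset.mem_univ, true_and]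
          exact fun x hx => Finset.mem_compl.mpr (fun hxT => Finset.mem_compl.mp (hT hxT) hx)
        · intro S _; simp
        · intro T _; simp
        · intro S _; rfl
      rw [h3, Finset.sum_powerset_neg_one_pow_card]
      have h4 : (Finset.image g univ)ᶜ = (∅ : Finset (Fin n)) ↔ Function.Surjective g := by
        rw [Finset.compl_eq_empty_iff, Finset.eq_univ_iff_forall]
        constructor
        · intro h b; rcases Finset.mem_image.mp (h b) with ⟨a, _, ha⟩; exact ⟨a, ha⟩
        · intro h b; rcases h b with ⟨a, ha⟩
          exact Finset.mem_image.mpr ⟨a, Finset.mem_univ a, ha⟩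
      split
      · rw [if_pos (h4.mp (by assumption))]
      · rw [if_neg (fun hs => (by assumption : ¬ _) (h4.mpr hs))]
    _ = ∑ g ∈ univ.filter (fun g : Fin n → Fin n => Function.Surjective g),
          ∏ j, u (g j) := by
      rw [Finset.sum_filter]
      refine Finset.sum_congr rfl fun g _ => ?_
      split <;> simp
    _ = ∑ σ : Equiv.Perm (Fin n), ∏ j, u (σ j) := by
      refine (Finset.sum_bij (fun (σ : Equiv.Perm (Fin n)) _ => (σ : Fin n → Fin n))
        ?_ ?_ ?_ ?_).symm
      · intro σ _
        simp only [Finset.mem_filter, Finset.mem_univ, true_and]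
        exact σ.surjective
      · intro a _ b _ h
        exact Equiv.coe_inj.mp h
      · intro g hg
        have hsurj : Function.Surjective g := by
          simpa using (Finset.mem_filter.mp hg).2
        have hbij : Function.Bijective g := Finite.surjective_iff_bijective.mp hsurj
        exact ⟨Equiv.ofBijective g hbij, Finset.mem_univ _, rfl⟩
      · intro σ _; rfl
    _ = ∑ _σ : Equiv.Perm (Fin n), ∏ j, u j :=
      Finset.sum_congr rfl fun σ _ => Equiv.prod_comp σ u
    _ = n.factorial • ∏ i, u i := by
      rw [Finset.sum_const, Finset.card_univ, Fintype.card_perm, Fintype.card_fin]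




/- STATEMENT 2.
The (even-degree) real cohomology ring of the path-connected space `X` is modelled by a
commutative ℝ-algebra `H` equipped with an augmentation `ε : H → ℝ` whose kernel is the
ideal of positive-degree classes.  Via the cross product, `H^*(X × X;ℝ) ≅ H ⊗[ℝ] H`, and
zero-divisors are the elements of the kernel of the cup-product (diagonal restriction)
map `LinearMap.mul' ℝ H : H ⊗[ℝ] H → H`, `a ⊗ b ↦ a ∪ b`.

Hypotheses: the real cup length of `X` equals `n`, witnessed by positive-degree classes
`u₁, …, uₙ` (all of even degree, hence commuting) with `u₁ ∪ ⋯ ∪ uₙ ≠ 0`, while every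
`(n+1)`-fold cup product of positive-degree classes vanishes.  Conclusion: the
zero-divisor cup length of `X` with real coefficients is at least `2n`, i.e. there are
`2n` zero-divisors with nonvanishing cup product. -/
theorem zcl_ge_two_mul_cl (H : Type*) [CommRing H] [Algebra ℝ H] (ε : H →ₐ[ℝ] ℝ)
    (n : ℕ) (u : Fin n → H)
    (hpos : ∀ i, ε (u i) = 0)
    (hne : ∏ i, u i ≠ 0)
    (hmax : ∀ v : Fin (n + 1) → H, (∀ j, ε (v j) = 0) → ∏ j, v j = 0) :
    ∃ z : Fin (2 * n) → H ⊗[ℝ] H,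
      (∀ i, LinearMap.mul' ℝ H (z i) = 0) ∧ ∏ i, z i ≠ 0 := by
  classical
  by_contra hcon
  push_neg at hcon
  -- every element of the augmentation ideal is (n+1)-nilpotent
  have hpow : ∀ v : H, ε v = 0 → v ^ (n + 1) = 0 := by
    intro v hv
    have h := hmax (fun _ => v) (fun _ => hv)
    simpa [Finset.prod_const, Finset.card_univ] using h
  -- every element of the augmentation ideal is n-nilpotent
  have hzn : ∀ v : H, ε v = 0 → v ^ n = 0 := by
    intro v hv
    set d : H ⊗[ℝ] H := v ⊗ₜ[ℝ] 1 - 1 ⊗ₜ[ℝ] v with hd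
    have hmul : LinearMap.mul' ℝ H d = 0 := by
      rw [hd, map_sub]
      simp
    have hzero : d ^ (2 * n) = 0 := by
      have h := hcon (fun _ => d) (fun _ => hmul)
      simpa [Finset.prod_const, Finset.card_univ] using h
    have hexp : d ^ (2 * n) = ∑ m ∈ Finset.range (2 * n + 1),
        (-1 : H ⊗[ℝ] H) ^ (m + 2 * n) * ((v ^ m) ⊗ₜ[ℝ] (v ^ (2 * n - m)))
          * ((2 * n).choose m : H ⊗[ℝ] H) := by
      rw [hd, sub_pow]
      refine Finset.sum_congr rfl fun m _ => ?_
      rw [Algebra.TensorProduct.tmul_pow, Algebra.TensorProduct.tmul_pow,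
        mul_assoc ((-1 : H ⊗[ℝ] H) ^ (m + 2 * n)),
        Algebra.TensorProduct.tmul_mul_tmul, one_pow, one_pow, mul_one, one_mul]
    have honly : ∑ m ∈ Finset.range (2 * n + 1),
        (-1 : H ⊗[ℝ] H) ^ (m + 2 * n) * ((v ^ m) ⊗ₜ[ℝ] (v ^ (2 * n - m)))
          * ((2 * n).choose m : H ⊗[ℝ] H)
        = (-1 : H ⊗[ℝ] H) ^ (n + 2 * n) * ((v ^ n) ⊗ₜ[ℝ] (v ^ n))
          * ((2 * n).choose n : H ⊗[ℝ] H) := by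
      rw [Finset.sum_eq_single n]
      · congr 2
        rw [show 2 * n - n = n by omega]
      · intro m hm hmn
        rw [Finset.mem_range] at hm
        rcases lt_or_gt_of_ne hmn with h | h
        · have : v ^ (2 * n - m) = 0 :=
            pow_eq_zero_of_le (by omega) (hpow v hv)
          rw [this, TensorProduct.tmul_zero, mul_zero, zero_mul]
        · have : v ^ m = 0 := pow_eq_zero_of_le (by omega) (hpow v hv)
          rw [this, TensorProduct.zero_tmul, mul_zero, zero_mul]
      · intro h
        exact absurd (Finset.mem_range.mpr (by omega)) h
    have hkey : ((2 * n).choose n) • ((v ^ n) ⊗ₜ[ℝ] (v ^ n)) = (0 : H ⊗[ℝ] H) := by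
      have h1 : (-1 : H ⊗[ℝ] H) ^ (n + 2 * n) * ((v ^ n) ⊗ₜ[ℝ] (v ^ n))
          * ((2 * n).choose n : H ⊗[ℝ] H) = 0 := by
        rw [← honly, ← hexp, hzero]
      have h2 := congrArg (fun x => (-1 : H ⊗[ℝ] H) ^ (n + 2 * n) * x) h1
      simp only [mul_zero] at h2
      rw [show ((-1 : H ⊗[ℝ] H) ^ (n + 2 * n) * ((-1 : H ⊗[ℝ] H) ^ (n + 2 * n)
          * ((v ^ n) ⊗ₜ[ℝ] (v ^ n)) * ((2 * n).choose n : H ⊗[ℝ] H)))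
        = ((-1 : H ⊗[ℝ] H) ^ (n + 2 * n) * (-1 : H ⊗[ℝ] H) ^ (n + 2 * n))
          * (((v ^ n) ⊗ₜ[ℝ] (v ^ n)) * ((2 * n).choose n : H ⊗[ℝ] H)) by ring] at h2
      rw [← pow_add, Even.neg_one_pow ⟨n + 2 * n, by ring⟩, one_mul] at h2
      rw [← h2, nsmul_eq_mul, mul_comm]
    -- deduce v ^ n ⊗ v ^ n = 0
    have htmul : (v ^ n) ⊗ₜ[ℝ] (v ^ n) = (0 : H ⊗[ℝ] H) := by
      have hc : ((2 * n).choose n : ℝ) ≠ 0 := by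
        exact Nat.cast_ne_zero.mpr (Nat.choose_pos (by omega)).ne'
      have := hkey
      rw [← Nat.cast_smul_eq_nsmul ℝ] at this
      rcases smul_eq_zero.mp this with h | h
      · exact absurd h hc
      · exact h
    -- deduce v ^ n = 0 using a dual functional
    by_contra hvn
    have hφ : ¬ ∀ φ : Module.Dual ℝ H, φ (v ^ n) = 0 := by
      rw [Module.forall_dual_apply_eq_zero_iff]
      exact hvn
    push_neg at hφ
    obtain ⟨φ, hφ⟩ := hφ
    have := congrArg ((TensorProduct.lid ℝ ℝ).toLinearMap.comp
      (TensorProduct.map φ φ)) htmul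
    simp only [LinearMap.comp_apply, TensorProduct.map_tmul, map_zero,
      LinearEquiv.coe_coe, TensorProduct.lid_tmul, smul_eq_mul] at this
    exact hφ (by
      rcases mul_self_eq_zero.mp this with h
      exact h)
  -- polarization
  have hall : ∀ S : Finset (Fin n), (∑ i ∈ S, u i) ^ n = 0 := by
    intro S
    refine hzn _ ?_
    rw [map_sum]
    exact Finset.sum_eq_zero fun i _ => hpos i
  have hpol := polarization_aux n u
  rw [Finset.sum_congr rfl (fun S _ => by rw [hall S, smul_zero] :
    ∀ S ∈ (Finset.univ : Finset (Finset (Fin n))), (-1:ℤ) ^ (Sᶜ.card) • (∑ i ∈ S, u i) ^ n = 0),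
    Finset.sum_const_zero] at hpol
  apply hne
  have h0 : (n.factorial : ℝ) • ∏ i, u i = 0 := by
    rw [Nat.cast_smul_eq_nsmul, ← hpol]
  rcases smul_eq_zero.mp h0 with h | h
  · exact absurd h (Nat.cast_ne_zero.mpr n.factorial_ne_zero)
  · exact h
end

section
/- Let p : E → B be a fibration, A an abelian group, and for each k let p_k : E_k → B be the k-fold fiberwise join of p with itself. Define the sectional category weight wgt_p(u) of a nonzero class u ∈ H̃^*(B;A) as the supremum of k with p_k^*(u) = 0. If wgt_p(u) = k then secat(p) ≥ k, where secat(p) is the minimal r such that B has an open cover by r+1 sets each admitting a continuous local section of p. -/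
/-!
If `secat p < k`, Schwarz's theorem gives a section of `p_k`, so `p_k^*` is injective; but
`wgt_p(u) = k` is a maximum, so `p_k^*(u) = 0` with `u ≠ 0`.
-/

open scoped ENat

/-- The sectional category of a map `p : E → B`: the minimal `r` such that `B` admits an
open cover by `r + 1` sets over each of which `p` has a continuous local section
(`⊤` if no such `r` exists). -/
noncomputable def secat {E B : Type*} [TopologicalSpace E] [TopologicalSpace B]
    (p : E → B) : ℕ∞ :=
  sInf {n : ℕ∞ | ∃ r : ℕ, n = (r : ℕ∞) ∧
    ∃ U : Fin (r + 1) → Set B, (∀ i, IsOpen (U i)) ∧ (∀ b, ∃ i, b ∈ U i) ∧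
      ∀ i, ∃ s : U i → E, Continuous s ∧ ∀ x : U i, p (s x) = (x : B)}

/-- The sectional category weight of a class `u ∈ H̃^*(B;A)` with respect to `p`:
`wgt_p(u) = sup { k | p_k^*(u) = 0 }`, where `pull k : H̃^*(B;A) → H̃^*(E_k;A)` is the
map induced by the `k`-fold fiberwise join `p_k : E_k → B` of `p` with itself. -/
noncomputable def wgt {HB : Type*} [AddCommGroup HB] {HE : ℕ → Type*}
    [∀ k, AddCommGroup (HE k)] (pull : ∀ k, HB →+ HE k) (u : HB) : ℕ∞ :=
  sSup {n : ℕ∞ | ∃ k : ℕ, n = (k : ℕ∞) ∧ pull k u = 0}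

/-- A finite supremum in `ℕ∞` is attained; `k ≠ 0` excludes `wgt pull u = sSup ∅ = 0`. -/
theorem map_eq_zero_of_wgt_eq {HB : Type*} [AddCommGroup HB] {HE : ℕ → Type*}
    [∀ k, AddCommGroup (HE k)] {pull : ∀ k, HB →+ HE k} {u : HB} {k : ℕ}
    (hwgt : wgt pull u = k) (hk : k ≠ 0) : pull k u = 0 := by
  set S : Set ℕ∞ := {n | ∃ j : ℕ, n = j ∧ pull j u = 0}
  have hsup : sSup S = k := hwgt
  have hS : S.Nonempty := Set.nonempty_iff_ne_empty.2 fun hempty =>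
    hk (by simpa [hempty] using hsup.symm)
  have : Nonempty S := hS.to_subtype
  obtain ⟨j, hkj, hj⟩ : sSup S ∈ S :=
    ENat.sSup_mem_of_nonempty_of_lt_top (hsup ▸ ENat.natCast_lt_top k)
  obtain rfl : k = j := by exact_mod_cast hsup.symm.trans hkj
  exact hj

theorem secat_ge_of_wgt_eq_general {E B : Type*} [TopologicalSpace E] [TopologicalSpace B]
    (p : E → B)
    (Ek : ℕ → Type*) [∀ k, TopologicalSpace (Ek k)]
    (pk : ∀ k, Ek k → B)
    (HB : Type*) [AddCommGroup HB] (HE : ℕ → Type*) [∀ k, AddCommGroup (HE k)]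
    (pull : ∀ k, HB →+ HE k)
    (hSchwarz : ∀ r : ℕ, secat p ≤ (r : ℕ∞) →
      ∃ s : B → Ek (r + 1), Continuous s ∧ ∀ b, pk (r + 1) (s b) = b)
    (hsection : ∀ (k : ℕ) (s : B → Ek k), Continuous s → (∀ b, pk k (s b) = b) →
      Function.Injective (pull k))
    (u : HB) (hu : u ≠ 0) (k : ℕ) (hwgt : wgt pull u = (k : ℕ∞)) :
    (k : ℕ∞) ≤ secat p := by
  cases k with
  | zero => simp
  | succ m =>
    have hzero : pull (m + 1) u = 0 := map_eq_zero_of_wgt_eq hwgt m.succ_ne_zero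
    by_contra! hlt
    obtain ⟨s, hs, hsec⟩ := hSchwarz m (Order.le_of_lt_add_one (by exact_mod_cast hlt))
    exact hu ((injective_iff_map_eq_zero _).1 (hsection (m + 1) s hs hsec) u hzero)

theorem secat_ge_of_wgt_eq {E B : Type*} [TopologicalSpace E] [TopologicalSpace B]
    (p : E → B) (hp : Continuous p)
    (Ek : ℕ → Type*) [∀ k, TopologicalSpace (Ek k)]
    (pk : ∀ k, Ek k → B) (hpk : ∀ k, Continuous (pk k))
    (HB : Type*) [AddCommGroup HB] (HE : ℕ → Type*) [∀ k, AddCommGroup (HE k)]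
    (pull : ∀ k, HB →+ HE k)
    (hSchwarz : ∀ r : ℕ, secat p ≤ (r : ℕ∞) →
      ∃ s : B → Ek (r + 1), Continuous s ∧ ∀ b, pk (r + 1) (s b) = b)
    (hsection : ∀ (k : ℕ) (s : B → Ek k), Continuous s → (∀ b, pk k (s b) = b) →
      Function.Injective (pull k))
    (u : HB) (hu : u ≠ 0) (k : ℕ) (hwgt : wgt pull u = (k : ℕ∞)) :
    (k : ℕ∞) ≤ secat p :=
  secat_ge_of_wgt_eq_general p Ek pk HB HE pull hSchwarz hsection u hu k hwgt
end

section
/- Let (M,g) be a complete Riemannian manifold, p ∈ M, and q a point in the cut locus of p such that there exist two distinct minimal geodesic segments γ₁, γ₂ from p to q. Then for every open neighborhood U of q, there is no continuous map s : {p} × U → GM assigning to each (p,x) a minimal geodesic segment from p to x, where GM ⊂ C⁰([0,1],M) carries the compact-open topology. -/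
open unitInterval

/-- A minimal geodesic segment in a metric space (with the Riemannian distance this is
exactly a length-minimizing geodesic segment parametrized proportionally to arc
length): `d(γ s, γ t) = |s − t| · d(γ 0, γ 1)` for all `s, t ∈ [0,1]`. -/
def IsMinGeodesic {M : Type*} [MetricSpace M] (γ : C(unitInterval, M)) : Prop :=
  ∀ s t : unitInterval, dist (γ s) (γ t) = |(s : ℝ) - (t : ℝ)| * dist (γ 0) (γ 1)

/-- The restriction of `γ` to `[0,t]`, reparametrized on `[0,1]`: `s ↦ γ (t·s)`. -/
noncomputable def geodRestrict {M : Type*} [MetricSpace M] (γ : C(unitInterval, M))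
    (t : unitInterval) : C(unitInterval, M) :=
  ⟨fun s => γ (Set.projIcc 0 1 zero_le_one ((t : ℝ) * (s : ℝ))),
    γ.continuous.comp (continuous_projIcc.comp
      (continuous_const.mul continuous_subtype_val))⟩

open Filter Topology

/-!
Near `q`, the points `g i t` (`t ≠ 1`) have the unique minimal geodesic `geodRestrict (g i) t`,
so a planner continuous at `q` must send `q` to `lim_{t → 1} geodRestrict (g i) t = g i`
for both `i`, contradicting `g 0 ≠ g 1`.
-/

section geodRestrict

variable {M : Type*} [MetricSpace M] (γ : C(I, M))

theorem continuous_geodRestrict : Continuous (geodRestrict γ) :=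
  ContinuousMap.continuous_of_continuous_uncurry _ <|
    γ.continuous.comp <| continuous_projIcc.comp <|
      (continuous_subtype_val.comp continuous_fst).mul (continuous_subtype_val.comp continuous_snd)

@[simp]
theorem geodRestrict_one : geodRestrict γ 1 = γ := by
  ext s
  simp [geodRestrict]

theorem eq_of_eventually_eq_geodRestrict {s : M → C(I, M)} (hs : ContinuousAt s (γ 1))
    (heq : ∀ᶠ t in 𝓝[≠] 1, s (γ t) = geodRestrict γ t) : s (γ 1) = γ := by
  have hrestrict : Tendsto (geodRestrict γ) (𝓝[≠] 1) (𝓝 γ) := by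
    simpa using ((continuous_geodRestrict γ).tendsto 1).mono_left nhdsWithin_le_nhds
  have hplanner : Tendsto (s ∘ γ) (𝓝[≠] 1) (𝓝 (s (γ 1))) :=
    (hs.comp γ.continuous.continuousAt).mono_left nhdsWithin_le_nhds
  exact tendsto_nhds_unique (hplanner.congr' heq) hrestrict

end geodRestrict

theorem no_continuous_geodesic_planner_general {M : Type*} [MetricSpace M]
    (p q : M) (g : Fin 2 → C(unitInterval, M))
    (h1 : ∀ i, g i 1 = q)
    (hne : g 0 ≠ g 1)
    (huniq : ∀ (i : Fin 2) (t : unitInterval), t ≠ 1 →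
      ∀ c : C(unitInterval, M), IsMinGeodesic c → c 0 = p → c 1 = g i t →
        c = geodRestrict (g i) t)
    (U : Set M) (hU : IsOpen U) (hq : q ∈ U) :
    ¬ ∃ s : M → C(unitInterval, M), ContinuousOn s U ∧
        ∀ x ∈ U, IsMinGeodesic (s x) ∧ s x 0 = p ∧ s x 1 = x := by
  rintro ⟨s, hs, hplan⟩
  have hsq : ∀ i, s q = g i := by
    intro i
    have hUi : U ∈ 𝓝 (g i 1) := h1 i ▸ hU.mem_nhds hq
    have heq : ∀ᶠ t in 𝓝[≠] 1, s (g i t) = geodRestrict (g i) t := by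
      filter_upwards [self_mem_nhdsWithin,
        mem_nhdsWithin_of_mem_nhds ((g i).continuous.continuousAt.preimage_mem_nhds hUi)]
        with t ht htU
      obtain ⟨hmin, hp, hx⟩ := hplan _ htU
      exact huniq i t ht _ hmin hp hx
    simpa [h1 i] using eq_of_eventually_eq_geodRestrict (g i) (hs.continuousAt hUi) heq
  exact hne ((hsq 0).symm.trans (hsq 1))

theorem no_continuous_geodesic_planner {M : Type*} [MetricSpace M]
    (p q : M) (g : Fin 2 → C(unitInterval, M))
    (hmin : ∀ i, IsMinGeodesic (g i))
    (h0 : ∀ i, g i 0 = p) (h1 : ∀ i, g i 1 = q)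
    (hne : g 0 ≠ g 1)
    (huniq : ∀ (i : Fin 2) (t : unitInterval), t ≠ 1 →
      ∀ c : C(unitInterval, M), IsMinGeodesic c → c 0 = p → c 1 = g i t →
        c = geodRestrict (g i) t)
    (U : Set M) (hU : IsOpen U) (hq : q ∈ U) :
    ¬ ∃ s : M → C(unitInterval, M), ContinuousOn s U ∧
        ∀ x ∈ U, IsMinGeodesic (s x) ∧ s x 0 = p ∧ s x 1 = x :=
  no_continuous_geodesic_planner_general p q g h1 hne huniq U hU hq
end

section
/- Let M be a closed Riemannian manifold, A ⊂ M × M, and K ⊂ TM the union over p ∈ M of the star-shaped regions K_p = { t·v : v ∈ C̃ut_p(M), t ∈ [0,1] }. Then there exists a continuous geodesic motion planner s : A → GM if and only if there exists a continuous local section σ : A → K of the restricted extended exponential map Exp|_K : K → M × M. -/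
/-! A section `σ` gives the planner `(p, q) ↦ (t ↦ exp_p (t σ(p, q)))`, continuous by the exponential
law for `C(unitInterval, M)`; a planner `s` gives the section `ν ∘ s`, since `ν` recovers the initial
vector of every minimal geodesic segment. -/

section ExpCurve

variable {M TM : Type*} [TopologicalSpace M] [TopologicalSpace TM]
  {smul : ℝ → TM → TM} {em : TM → M}

def expCurve (hem : Continuous em) (hsmul : Continuous fun z : ℝ × TM => smul z.1 z.2) (w : TM) :
    C(unitInterval, M) :=
  ⟨fun t => em (smul t w), hem.comp (hsmul.comp (continuous_subtype_val.prodMk continuous_const))⟩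

theorem continuous_expCurve (hem : Continuous em)
    (hsmul : Continuous fun z : ℝ × TM => smul z.1 z.2) : Continuous (expCurve hem hsmul) :=
  ContinuousMap.continuous_of_continuous_uncurry _ <|
    hem.comp <| hsmul.comp <|
      (continuous_subtype_val.comp continuous_snd).prodMk continuous_fst

end ExpCurve

theorem geodesic_planner_iff_section_general
    (M : Type*) [MetricSpace M]
    (TM : Type*) [TopologicalSpace TM]
    (proj : TM → M)
    (smul : ℝ → TM → TM) (hsmul : Continuous fun z : ℝ × TM => smul z.1 z.2)
    (em : TM → M) (hem : Continuous em)
    (K : Set TM)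
    -- the continuous map `ν : GM → TM`, `γ ↦ γ'(0)`
    (nu : C(unitInterval, M) → TM) (hnu_cont : Continuous nu)
    (hnu : ∀ w ∈ K, nu
      (ContinuousMap.mk (fun t : unitInterval => em (smul (t : ℝ) w))
        (hem.comp (hsmul.comp (continuous_subtype_val.prodMk continuous_const)))) = w)
    (A : Set (M × M)) :
    (∃ s : ↥A → C(unitInterval, M), Continuous s ∧
        ∀ a : ↥A, ∃ w ∈ K, proj w = (a : M × M).1 ∧ em w = (a : M × M).2 ∧
          ∀ t : unitInterval, s a t = em (smul (t : ℝ) w)) ↔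
      (∃ sec : ↥A → TM, Continuous sec ∧ ∀ a : ↥A, sec a ∈ K ∧
        proj (sec a) = (a : M × M).1 ∧ em (sec a) = (a : M × M).2) := by
  constructor
  · rintro ⟨s, hs, hsK⟩
    refine ⟨nu ∘ s, hnu_cont.comp hs, fun a => ?_⟩
    obtain ⟨w, hwK, hw_proj, hw_em, hs_eq⟩ := hsK a
    have hsa : s a = expCurve hem hsmul w := ContinuousMap.ext hs_eq
    have hnu_sa : nu (s a) = w := by rw [hsa]; exact hnu w hwK
    simpa only [Function.comp_apply, hnu_sa] using ⟨hwK, hw_proj, hw_em⟩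
  · rintro ⟨sec, hsec, hsecK⟩
    exact ⟨expCurve hem hsmul ∘ sec, (continuous_expCurve hem hsmul).comp hsec,
      fun a => ⟨sec a, (hsecK a).1, (hsecK a).2.1, (hsecK a).2.2, fun _ => rfl⟩⟩

theorem geodesic_planner_iff_section
    (M : Type*) [MetricSpace M] [CompactSpace M]
    (TM : Type*) [TopologicalSpace TM]
    (proj : TM → M) (hproj : Continuous proj)
    (smul : ℝ → TM → TM) (hsmul : Continuous fun z : ℝ × TM => smul z.1 z.2)
    (hsmul_proj : ∀ t w, proj (smul t w) = proj w)
    (hsmul_one : ∀ w, smul 1 w = w)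
    (nrm : TM → ℝ) (hnrm : Continuous nrm)
    (em : TM → M) (hem : Continuous em)
    (K : Set TM) (hK : K = {w | dist (proj w) (em w) = nrm w})
    -- the continuous map `ν : GM → TM`, `γ ↦ γ'(0)`
    (nu : C(unitInterval, M) → TM) (hnu_cont : Continuous nu)
    (hnu : ∀ w ∈ K, nu
      (ContinuousMap.mk (fun t : unitInterval => em (smul (t : ℝ) w))
        (hem.comp (hsmul.comp (continuous_subtype_val.prodMk continuous_const)))) = w)
    (A : Set (M × M)) :
    (∃ s : ↥A → C(unitInterval, M), Continuous s ∧
        ∀ a : ↥A, ∃ w ∈ K, proj w = (a : M × M).1 ∧ em w = (a : M × M).2 ∧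
          ∀ t : unitInterval, s a t = em (smul (t : ℝ) w)) ↔
      (∃ sec : ↥A → TM, Continuous sec ∧ ∀ a : ↥A, sec a ∈ K ∧
        proj (sec a) = (a : M × M).1 ∧ em (sec a) = (a : M × M).2) :=
  geodesic_planner_iff_section_general M TM proj smul hsmul em hem K nu hnu_cont hnu A
end
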